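/- arXiv:1306.5599 — 4 statements merged into one kernel-verified Lean document; each statement's English description precedes it below -/
import Mathlib

section
/- If unit spheres are centered at the 12 vertices of a regular icosahedron with side length 2 centered at the origin, then each of these spheres is tangent to (kisses) the unit sphere centered at the origin, and no two of the 12 spheres overlap (their interiors are pairwise disjoint). Hence the kissing number of the unit sphere in 3-dimensional Euclidean space is at least 12. -/
/-! The icosahedron vertices have norm `√(1 + φ²)` and distinct ones are at distance at least
`2 ≥ √(1 + φ²)` (as `φ² = φ + 1 < 3`), so scaling by `2 / √(1 + φ²)` puts them at norm `2`
while keeping them at least `2` apart. -/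

open Real

/-- The golden ratio. -/
noncomputable def goldenφ : ℝ := (1 + Real.sqrt 5) / 2

/-- Centers of the 12 kissing spheres: rescaled vertices of a regular icosahedron
with side length 2 (vertices are the cyclic permutations of (0, ±1, ±φ)),
scaled so that each center lies at distance 2 from the origin. -/
noncomputable def kissingCenters : List (EuclideanSpace ℝ (Fin 3)) :=
  ([!₂[0, 1, goldenφ], !₂[0, 1, -goldenφ], !₂[0, -1, goldenφ], !₂[0, -1, -goldenφ],
    !₂[goldenφ, 0, 1], !₂[-goldenφ, 0, 1], !₂[goldenφ, 0, -1], !₂[-goldenφ, 0, -1],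
    !₂[1, goldenφ, 0], !₂[1, -goldenφ, 0], !₂[-1, goldenφ, 0], !₂[-1, -goldenφ, 0]]
      : List (EuclideanSpace ℝ (Fin 3))).map
    (fun v => (2 / Real.sqrt (1 + goldenφ ^ 2)) • v)

section Rescaling

variable {E : Type*} [NormedAddCommGroup E] [NormedSpace ℝ E] {u v : E} {r c : ℝ}

theorem norm_smul_div_of_norm_eq (hc : 0 ≤ c) (hr : 0 < r) (hu : ‖u‖ = r) :
    ‖(c / r) • u‖ = c := by
  rw [norm_smul, Real.norm_of_nonneg (div_nonneg hc hr.le), hu, div_mul_cancel₀ c hr.ne']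

theorem le_dist_smul_div_of_le_dist (hc : 0 ≤ c) (hr : 0 < r) (h : r ≤ dist u v) :
    c ≤ dist ((c / r) • u) ((c / r) • v) := by
  rw [dist_smul₀, Real.norm_of_nonneg (div_nonneg hc hr.le), div_mul_eq_mul_div,
    le_div_iff₀ hr]
  exact mul_le_mul_of_nonneg_left h hc

end Rescaling

noncomputable def icosahedronVertices : List (EuclideanSpace ℝ (Fin 3)) :=
  [!₂[0, 1, goldenφ], !₂[0, 1, -goldenφ], !₂[0, -1, goldenφ], !₂[0, -1, -goldenφ],
    !₂[goldenφ, 0, 1], !₂[-goldenφ, 0, 1], !₂[goldenφ, 0, -1], !₂[-goldenφ, 0, -1],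
    !₂[1, goldenφ, 0], !₂[1, -goldenφ, 0], !₂[-1, goldenφ, 0], !₂[-1, -goldenφ, 0]]

theorem kissingCenters_eq :
    kissingCenters = icosahedronVertices.map (fun v => (2 / √(1 + goldenφ ^ 2)) • v) := rfl

theorem norm_sq_of_mem_icosahedronVertices {u : EuclideanSpace ℝ (Fin 3)}
    (hu : u ∈ icosahedronVertices) : ‖u‖ ^ 2 = 1 + goldenφ ^ 2 := by
  simp only [icosahedronVertices, List.mem_cons, List.not_mem_nil, or_false] at hu
  rw [EuclideanSpace.real_norm_sq_eq, Fin.sum_univ_three]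
  rcases hu with rfl | rfl | rfl | rfl | rfl | rfl | rfl | rfl | rfl | rfl | rfl | rfl <;>
    simp <;> ring

/-- Distinct vertices are at squared distance `4`, `4φ²` or `4 + 4φ²`; the first case
needs `φ² = φ + 1`. -/
theorem four_le_dist_sq_of_mem_icosahedronVertices {u v : EuclideanSpace ℝ (Fin 3)}
    (hu : u ∈ icosahedronVertices) (hv : v ∈ icosahedronVertices) (huv : u ≠ v) :
    4 ≤ dist u v ^ 2 := by
  have hsq : goldenφ ^ 2 = goldenφ + 1 := goldenRatio_sq
  have hone : 1 < goldenφ := one_lt_goldenRatio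
  simp only [icosahedronVertices, List.mem_cons, List.not_mem_nil, or_false] at hu hv
  rw [dist_eq_norm, EuclideanSpace.real_norm_sq_eq, Fin.sum_univ_three]
  rcases hu with rfl | rfl | rfl | rfl | rfl | rfl | rfl | rfl | rfl | rfl | rfl | rfl <;>
    rcases hv with rfl | rfl | rfl | rfl | rfl | rfl | rfl | rfl | rfl | rfl | rfl | rfl <;>
    first
      | exact absurd rfl huv
      | (simp; nlinarith)

theorem one_add_goldenφ_sq_le_four : 1 + goldenφ ^ 2 ≤ 4 := by
  have hsq : goldenφ ^ 2 = goldenφ + 1 := goldenRatio_sq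
  have htwo : goldenφ < 2 := goldenRatio_lt_two
  linarith

/-- Unit spheres centered at the (rescaled) 12 vertices of a regular icosahedron all
kiss the unit sphere at the origin (centers at distance exactly 2 from the origin),
and no two of them overlap (distinct centers at distance at least 2).
Hence the kissing number in dimension 3 is at least 12. -/
theorem kissing_number_three_ge_twelve :
    kissingCenters.length = 12 ∧
    (∀ p ∈ kissingCenters, dist p (0 : EuclideanSpace ℝ (Fin 3)) = 2) ∧
    (∀ p ∈ kissingCenters, ∀ q ∈ kissingCenters, p ≠ q → 2 ≤ dist p q) := by
  have hr : 0 < √(1 + goldenφ ^ 2) := Real.sqrt_pos.mpr (by positivity)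
  rw [kissingCenters_eq]
  refine ⟨rfl, fun p hp => ?_, fun p hp q hq hne => ?_⟩
  · obtain ⟨u, hu, rfl⟩ := List.mem_map.mp hp
    rw [dist_zero_right]
    refine norm_smul_div_of_norm_eq zero_le_two hr ?_
    rw [← norm_sq_of_mem_icosahedronVertices hu, Real.sqrt_sq (norm_nonneg u)]
  · obtain ⟨u, hu, rfl⟩ := List.mem_map.mp hp
    obtain ⟨v, hv, rfl⟩ := List.mem_map.mp hq
    have huv : u ≠ v := fun h => hne (h ▸ rfl)
    refine le_dist_smul_div_of_le_dist zero_le_two hr ((Real.sqrt_le_left dist_nonneg).mpr ?_)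
    exact one_add_goldenφ_sq_le_four.trans
      (four_le_dist_sq_of_mem_icosahedronVertices hu hv huv)
end

section
/- The volume of the intersection of three mutually perpendicular solid cylinders of radius r (with axes along the coordinate axes) equals 8(2−√2)r³. -/
/-!
Split the solid according to which coordinate has the largest absolute value. The pieces overlap
only on the null sets `|p i| = |p k|`, and a permutation of coordinates maps one piece onto
another, so the volume is `3` times that of the piece where `|z|` is largest. On that piece the
condition `x² + y² ≤ r²` follows from the other two, so its slice at height `z` is the square
`x², y² ≤ min (z², r² - z²)` of area `4 min (z², r² - z²)`, and integrating this piecewise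
polynomial in `z` gives the result.
-/

open MeasureTheory Real

theorem measurePreserving_comp_perm {ι α : Type*} [Fintype ι] [MeasureSpace α]
    [SigmaFinite (volume : Measure α)] (σ : Equiv.Perm ι) :
    MeasurePreserving (fun p : ι → α => p ∘ σ) volume volume :=
  volume_preserving_arrowCongr' σ.symm (MeasurableEquiv.refl α) (MeasurePreserving.id volume)

theorem volume_setOf_eq_mul {ι : Type*} [Fintype ι] [DecidableEq ι] {i k : ι} (hik : i ≠ k)
    (c : ℝ) : volume {p : ι → ℝ | p i = c * p k} = 0 := by
  let s : Submodule ℝ (ι → ℝ) := LinearMap.ker (LinearMap.proj i - c • LinearMap.proj k)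
  have hs : s ≠ ⊤ := fun h => by
    have : Pi.single i (1 : ℝ) ∈ s := h ▸ Submodule.mem_top
    simp [s, hik.symm] at this
  convert Measure.addHaar_submodule volume s hs using 2
  ext p
  simp [s, sub_eq_zero]

theorem volume_setOf_abs_eq_abs {ι : Type*} [Fintype ι] {i k : ι} (hik : i ≠ k) :
    volume {p : ι → ℝ | |p i| = |p k|} = 0 := by
  classical
  have hsub : {p : ι → ℝ | |p i| = |p k|} ⊆ {p | p i = 1 * p k} ∪ {p | p i = -1 * p k} := by
    intro p hp
    simpa [abs_eq_abs] using hp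
  exact measure_mono_null hsub
    (measure_union_null (volume_setOf_eq_mul hik 1) (volume_setOf_eq_mul hik (-1)))

-- For `c < 0` both sides vanish, the right one because `√c = 0`.
theorem volume_setOf_sq_le (c : ℝ) : volume {s : ℝ | s ^ 2 ≤ c} = ENNReal.ofReal (2 * √c) := by
  rcases le_or_gt 0 c with hc | hc
  · have : {s : ℝ | s ^ 2 ≤ c} = Set.Icc (-√c) √c := by
      ext s
      simp [Real.sq_le hc]
    rw [this, Real.volume_Icc]
    ring_nf
  · have : {s : ℝ | s ^ 2 ≤ c} = ∅ := by
      ext s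
      simpa using hc.trans_le (sq_nonneg s)
    simp [this, Real.sqrt_eq_zero_of_nonpos hc.le]

def steinmetzSolid (n : ℕ) (r : ℝ) : Set (Fin n → ℝ) :=
  {p | ∀ i j, i ≠ j → p i ^ 2 + p j ^ 2 ≤ r ^ 2}

def absMaxAt {n : ℕ} (i : Fin n) : Set (Fin n → ℝ) :=
  {p | ∀ j, |p j| ≤ |p i|}

section

variable {n : ℕ} {r : ℝ}

theorem measurableSet_steinmetzSolid : MeasurableSet (steinmetzSolid n r) := by
  simp only [steinmetzSolid, Set.ofPred_forall]
  refine .iInter fun i => .iInter fun j => .iInter fun _ => ?_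
  exact measurableSet_le (by fun_prop) measurable_const

theorem measurableSet_absMaxAt (i : Fin n) : MeasurableSet (absMaxAt i) := by
  simp only [absMaxAt, Set.ofPred_forall]
  exact .iInter fun j => measurableSet_le (by fun_prop) (by fun_prop)

theorem comp_perm_mem_steinmetzSolid (σ : Equiv.Perm (Fin n)) (p : Fin n → ℝ) :
    p ∘ σ ∈ steinmetzSolid n r ↔ p ∈ steinmetzSolid n r := by
  refine ⟨fun h i j hij => ?_, fun h i j hij => h _ _ (σ.injective.ne hij)⟩
  simpa using h (σ.symm i) (σ.symm j) (σ.symm.injective.ne hij)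

theorem comp_perm_mem_absMaxAt (σ : Equiv.Perm (Fin n)) (p : Fin n → ℝ) (i : Fin n) :
    p ∘ σ ∈ absMaxAt i ↔ p ∈ absMaxAt (σ i) :=
  σ.forall_congr_right (q := fun j => |p j| ≤ |p (σ i)|)

theorem iUnion_steinmetzSolid_inter_absMaxAt [NeZero n] :
    ⋃ i, steinmetzSolid n r ∩ absMaxAt i = steinmetzSolid n r := by
  rw [← Set.inter_iUnion, Set.inter_eq_left]
  intro p _
  simpa [absMaxAt] using Finite.exists_max fun j => |p j|

theorem volume_steinmetzSolid_eq_mul [NeZero n] :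
    volume (steinmetzSolid n r) = n * volume (steinmetzSolid n r ∩ absMaxAt 0) := by
  have hdisj : Pairwise fun i k =>
      AEDisjoint volume (steinmetzSolid n r ∩ absMaxAt i) (steinmetzSolid n r ∩ absMaxAt k) :=
    fun i k hik => measure_mono_null (fun p ⟨⟨_, hi⟩, ⟨_, hk⟩⟩ => (hk i).antisymm (hi k))
      (volume_setOf_abs_eq_abs hik)
  have hsymm (i : Fin n) : volume (steinmetzSolid n r ∩ absMaxAt i)
      = volume (steinmetzSolid n r ∩ absMaxAt 0) := by
    rw [← (measurePreserving_comp_perm (Equiv.swap 0 i)).measure_preimage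
      (measurableSet_steinmetzSolid.inter (measurableSet_absMaxAt 0)).nullMeasurableSet]
    congr 1 with p
    simp [comp_perm_mem_steinmetzSolid, comp_perm_mem_absMaxAt]
  conv_lhs => rw [← iUnion_steinmetzSolid_inter_absMaxAt]
  rw [measure_iUnion₀ hdisj
    fun i => (measurableSet_steinmetzSolid.inter (measurableSet_absMaxAt i)).nullMeasurableSet,
    tsum_fintype, Finset.sum_congr rfl fun i _ => hsymm i]
  simp

theorem cons_mem_steinmetzSolid_inter_absMaxAt_zero (t : ℝ) (q : Fin n → ℝ) :
    Fin.cons t q ∈ steinmetzSolid (n + 1) r ∩ absMaxAt 0 ↔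
      ∀ j, q j ^ 2 ≤ min (t ^ 2) (r ^ 2 - t ^ 2) := by
  simp only [le_min_iff, le_sub_iff_add_le, ← sq_le_sq, Set.mem_inter_iff, steinmetzSolid,
    absMaxAt, Set.mem_ofPred_eq, Fin.forall_fin_succ, Fin.cons_zero, Fin.cons_succ, ne_eq,
    Fin.succ_ne_zero, (Fin.succ_ne_zero _).symm, Fin.succ_inj, not_true, not_false_eq_true,
    IsEmpty.forall_iff, forall_const, le_refl, true_and]
  constructor
  · rintro ⟨⟨-, h⟩, hmax⟩
    exact fun j => ⟨hmax j, (h j).1⟩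
  · intro h
    refine ⟨⟨fun i => by linarith [(h i).2], fun i => ⟨(h i).2, fun j _ => ?_⟩⟩, fun i => (h i).1⟩
    linarith [(h i).1, (h j).2]

theorem volume_steinmetzSolid_inter_absMaxAt_zero :
    volume (steinmetzSolid (n + 1) r ∩ absMaxAt 0) =
      ∫⁻ t, volume {s : ℝ | s ^ 2 ≤ min (t ^ 2) (r ^ 2 - t ^ 2)} ^ n := by
  have he := (volume_preserving_piFinSuccAbove (fun _ : Fin (n + 1) => ℝ) 0).symm
  rw [← he.measure_preimage_equiv, Measure.volume_eq_prod, Measure.prod_apply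
    (he.measurable (measurableSet_steinmetzSolid.inter (measurableSet_absMaxAt 0)))]
  refine lintegral_congr fun t => ?_
  have hslice : Prod.mk t ⁻¹' ((MeasurableEquiv.piFinSuccAbove (fun _ => ℝ) 0).symm ⁻¹'
      (steinmetzSolid (n + 1) r ∩ absMaxAt 0)) =
      Set.univ.pi fun _ => {s : ℝ | s ^ 2 ≤ min (t ^ 2) (r ^ 2 - t ^ 2)} := by
    ext q
    simp only [Set.mem_preimage, MeasurableEquiv.piFinSuccAbove_symm_apply,
      Fin.insertNthEquiv_zero, Set.mem_pi, Set.mem_univ, forall_const, Set.mem_ofPred_eq]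
    exact cons_mem_steinmetzSolid_inter_absMaxAt_zero (r := r) t q
  rw [hslice, volume_pi_pi]
  simp

theorem volume_steinmetzSolid (n : ℕ) (r : ℝ) :
    volume (steinmetzSolid (n + 1) r) =
      (n + 1) * ∫⁻ t, ENNReal.ofReal (2 * √(min (t ^ 2) (r ^ 2 - t ^ 2))) ^ n := by
  simp_rw [volume_steinmetzSolid_eq_mul, volume_steinmetzSolid_inter_absMaxAt_zero,
    volume_setOf_sq_le, Nat.cast_add_one]

end

theorem ofReal_two_mul_sqrt_sq (m : ℝ) :
    ENNReal.ofReal (2 * √m) ^ 2 = 4 * ENNReal.ofReal m := by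
  rcases le_or_gt 0 m with hm | hm
  · rw [← ENNReal.ofReal_pow (by positivity), mul_pow, Real.sq_sqrt hm,
      ENNReal.ofReal_mul (by norm_num)]
    norm_num
  · simp [Real.sqrt_eq_zero_of_nonpos hm.le, ENNReal.ofReal_of_nonpos hm.le]

theorem integral_min_sq_sub_sq {r : ℝ} (hr : 0 ≤ r) :
    ∫ t in -r..r, min (t ^ 2) (r ^ 2 - t ^ 2) = 2 * (2 - √2) * r ^ 3 / 3 := by
  set c := √2 / 2 * r with hc
  have h2 : √2 ^ 2 = 2 := Real.sq_sqrt zero_le_two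
  have hc0 : 0 ≤ c := by positivity
  have hcr : c ≤ r := by nlinarith [Real.sqrt_nonneg 2]
  have hcc : c ^ 2 = r ^ 2 / 2 := by rw [hc, mul_pow, div_pow, h2]; ring
  have hint (a b : ℝ) : IntervalIntegrable (fun t => min (t ^ 2) (r ^ 2 - t ^ 2)) volume a b :=
    (by fun_prop : Continuous fun t : ℝ => min (t ^ 2) (r ^ 2 - t ^ 2)).intervalIntegrable a b
  have hl : Set.EqOn (fun t => min (t ^ 2) (r ^ 2 - t ^ 2)) (fun t => r ^ 2 - t ^ 2)
      (Set.uIcc (-r) (-c)) := by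
    intro t ht
    rw [Set.uIcc_of_le (by linarith)] at ht
    exact min_eq_right (by nlinarith [ht.1, ht.2])
  have hm : Set.EqOn (fun t => min (t ^ 2) (r ^ 2 - t ^ 2)) (fun t => t ^ 2)
      (Set.uIcc (-c) c) := by
    intro t ht
    rw [Set.uIcc_of_le (by linarith)] at ht
    exact min_eq_left (by nlinarith [ht.1, ht.2])
  have hr' : Set.EqOn (fun t => min (t ^ 2) (r ^ 2 - t ^ 2)) (fun t => r ^ 2 - t ^ 2)
      (Set.uIcc c r) := by
    intro t ht
    rw [Set.uIcc_of_le hcr] at ht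
    exact min_eq_right (by nlinarith [ht.1, ht.2])
  rw [← intervalIntegral.integral_add_adjacent_intervals (hint _ (-c)) (hint _ r),
    ← intervalIntegral.integral_add_adjacent_intervals (hint _ c) (hint _ r),
    intervalIntegral.integral_congr hl, intervalIntegral.integral_congr hm,
    intervalIntegral.integral_congr hr']
  simp only [intervalIntegral.integral_sub, intervalIntegrable_const,
    intervalIntegral.intervalIntegrable_pow, intervalIntegral.integral_const, smul_eq_mul,
    integral_pow]
  linear_combination (4 / 3 * c) * hcc - (4 / 3 * r ^ 2) * hc

theorem lintegral_ofReal_min_sq_sub_sq {r : ℝ} (hr : 0 ≤ r) :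
    ∫⁻ t, ENNReal.ofReal (min (t ^ 2) (r ^ 2 - t ^ 2)) =
      ENNReal.ofReal (2 * (2 - √2) * r ^ 3 / 3) := by
  have hsupp : (fun t => ENNReal.ofReal (min (t ^ 2) (r ^ 2 - t ^ 2))).support ⊆
      Set.Icc (-r) r := by
    intro t ht
    rw [Function.mem_support, ENNReal.ofReal_ne_zero_iff, lt_min_iff, sub_pos] at ht
    exact abs_le_of_sq_le_sq' ht.2.le hr
  rw [← setLIntegral_eq_of_support_subset hsupp, ← ofReal_integral_eq_lintegral_ofReal,
    integral_Icc_eq_integral_Ioc, ← intervalIntegral.integral_of_le (by linarith),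
    integral_min_sq_sub_sq hr]
  · exact (by fun_prop : Continuous fun t : ℝ => min (t ^ 2) (r ^ 2 - t ^ 2)).integrableOn_Icc
  · refine ae_restrict_of_forall_mem measurableSet_Icc fun t ht => ?_
    exact le_min (sq_nonneg t) (sub_nonneg.mpr (sq_le_sq' ht.1 ht.2))

theorem steinmetzSolid_three (r : ℝ) : steinmetzSolid 3 r = {p : Fin 3 → ℝ |
    p 0 ^ 2 + p 1 ^ 2 ≤ r ^ 2 ∧ p 1 ^ 2 + p 2 ^ 2 ≤ r ^ 2 ∧ p 0 ^ 2 + p 2 ^ 2 ≤ r ^ 2} := by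
  ext p
  refine ⟨fun h => ⟨h 0 1 (by decide), h 1 2 (by decide), h 0 2 (by decide)⟩, ?_⟩
  rintro ⟨h01, h12, h02⟩ i j hij
  fin_cases i <;> fin_cases j <;>
    simp only [Fin.zero_eta, Fin.mk_one, Fin.reduceFinMk, Fin.isValue, ne_eq,
      not_true_eq_false] at hij ⊢ <;> linarith

/-- The intersection of three mutually perpendicular solid cylinders of radius r
(axes along the coordinate axes) has volume 8(2−√2)r³. -/
theorem steinmetz_three_cylinders (r : ℝ) (hr : 0 < r) :
    volume {p : Fin 3 → ℝ | p 0 ^ 2 + p 1 ^ 2 ≤ r ^ 2 ∧ p 1 ^ 2 + p 2 ^ 2 ≤ r ^ 2 ∧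
        p 0 ^ 2 + p 2 ^ 2 ≤ r ^ 2}
      = ENNReal.ofReal (8 * (2 - Real.sqrt 2) * r ^ 3) := by
  rw [← steinmetzSolid_three, volume_steinmetzSolid 2 r]
  simp_rw [ofReal_two_mul_sqrt_sq]
  rw [lintegral_const_mul' _ _ ENNReal.ofNat_ne_top, lintegral_ofReal_min_sq_sub_sq hr.le,
    show 8 * (2 - √2) * r ^ 3 = 3 * (4 * (2 * (2 - √2) * r ^ 3 / 3)) by ring,
    ENNReal.ofReal_mul (by norm_num), ENNReal.ofReal_mul (by norm_num)]
  norm_num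
end

section
/- Morley's trisector theorem: in any triangle, the three points of intersection of adjacent angle trisectors form an equilateral triangle. -/
/-!
Write `α, β, γ` for the thirds of the angles at `A, B, C`, so that `α + β + γ = π / 3`, and
`k = BC / sin 3α = CA / sin 3β = AB / sin 3γ`. The law of sines in triangle `ABR` together with
`sin 3θ = 4 sin θ sin (π/3 + θ) sin (π/3 - θ)` and `α + β = π/3 - γ` gives
`AR = 4k sin β sin γ sin (π/3 + γ)`, and likewise `AQ = 4k sin β sin γ sin (π/3 + β)`.
The angle `RAQ` is the middle third `α` of the angle at `A`, and `α`, `π/3 + β`, `π/3 + γ` are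
the angles of a triangle, so the law of cosines in `ARQ` yields `QR = 4k sin α sin β sin γ`,
which is symmetric in the three vertices.
-/

open EuclideanGeometry Module

namespace Real

theorem sin_three_mul_eq_four_mul_sin_mul_sin_mul_sin (θ : ℝ) :
    sin (3 * θ) = 4 * sin θ * sin (π / 3 + θ) * sin (π / 3 - θ) := by
  rw [sin_three_mul, sin_add, sin_sub, sin_pi_div_three, cos_pi_div_three]
  linear_combination -(sin θ * cos θ ^ 2) * sq_sqrt (zero_le_three : (0 : ℝ) ≤ 3) -
    3 * sin θ * sin_sq_add_cos_sq θ

theorem sin_sq_add_sin_sq_sub_two_mul_sin_mul_sin_mul_cos {x y z : ℝ} (h : x + y + z = π) :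
    sin y ^ 2 + sin z ^ 2 - 2 * sin y * sin z * cos x = sin x ^ 2 := by
  rw [show x = π - (y + z) by linarith, sin_pi_sub, cos_pi_sub, sin_add, cos_add]
  linear_combination -sin y ^ 2 * sin_sq_add_cos_sq z - sin z ^ 2 * sin_sq_add_cos_sq y

end Real

open Real

namespace EuclideanGeometry

variable {V P : Type*} [NormedAddCommGroup V] [InnerProductSpace ℝ V] [MetricSpace P]
  [NormedAddTorsor V P]

theorem dist_mul_sin_angle_add_angle_eq {A B X : P} (hXA : X ≠ A) :
    dist A X * sin (∠ X A B + ∠ X B A) = dist A B * sin (∠ X B A) := by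
  have hsum := angle_add_angle_add_angle_eq_pi B hXA.symm
  rw [angle_comm A B X, angle_comm B X A] at hsum
  rw [show ∠ X A B + ∠ X B A = π - ∠ A X B by linarith, sin_pi_sub, dist_comm A B]
  linear_combination (law_sin X B A).symm

theorem dist_eq_four_mul_sin_mul_sin_mul_sin_pi_div_three_add {A B X : P} {α β γ k : ℝ}
    (hα : 0 < α) (hγ : 0 < γ) (hsum : α + β + γ = π / 3) (hAB : dist A B = k * sin (3 * γ))
    (hXA : ∠ X A B = α) (hXB : ∠ X B A = β) :
    dist A X = 4 * k * sin β * sin γ * sin (π / 3 + γ) := by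
  have hβ : 0 ≤ β := hXB ▸ angle_nonneg X B A
  have hXA' : X ≠ A := by
    rintro rfl
    rw [angle_self_left] at hXA
    linarith [pi_pos]
  have hsin : 0 < sin (π / 3 - γ) := sin_pos_of_pos_of_lt_pi (by linarith) (by linarith [pi_pos])
  have h := dist_mul_sin_angle_add_angle_eq (B := B) hXA'
  rw [hXA, hXB, show α + β = π / 3 - γ by linarith, hAB,
    sin_three_mul_eq_four_mul_sin_mul_sin_mul_sin] at h
  apply mul_right_cancel₀ hsin.ne'
  linear_combination h

theorem dist_eq_four_mul_sin_mul_sin_mul_sin {A B C Q R : P} {α β γ k : ℝ}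
    (hα : 0 < α) (hβ : 0 < β) (hγ : 0 < γ) (hsum : α + β + γ = π / 3) (hk : 0 ≤ k)
    (hAB : dist A B = k * sin (3 * γ)) (hAC : dist A C = k * sin (3 * β))
    (hRA : ∠ R A B = α) (hRB : ∠ R B A = β) (hQA : ∠ Q A C = α) (hQC : ∠ Q C A = γ)
    (hRAQ : ∠ R A Q = α) : dist Q R = 4 * k * sin α * sin β * sin γ := by
  have hAR := dist_eq_four_mul_sin_mul_sin_mul_sin_pi_div_three_add hα hγ hsum hAB hRA hRB
  have hAQ := dist_eq_four_mul_sin_mul_sin_mul_sin_pi_div_three_add hα hβ (by linarith) hAC hQA hQC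
  have hcos := sin_sq_add_sin_sq_sub_two_mul_sin_mul_sin_mul_cos
    (x := α) (y := π / 3 + β) (z := π / 3 + γ) (by linarith)
  have hsq : dist Q R ^ 2 = (4 * k * sin α * sin β * sin γ) ^ 2 := by
    rw [sq, law_cos, angle_comm, hRAQ, dist_comm Q A, dist_comm R A, hAR, hAQ]
    linear_combination (16 * k ^ 2 * sin β ^ 2 * sin γ ^ 2) * hcos
  have hsin : ∀ θ, 0 < θ → θ < π / 3 → 0 < sin θ := fun θ h₀ h₁ =>
    sin_pos_of_pos_of_lt_pi h₀ (by linarith [pi_pos])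
  refine (sq_eq_sq₀ dist_nonneg ?_).1 hsq
  have := hsin α hα (by linarith)
  have := hsin β hβ (by linarith)
  have := hsin γ hγ (by linarith)
  positivity

theorem angle_eq_sub_sub_of_oangle_sign_eq [Fact (finrank ℝ V = 2)] [Module.Oriented ℝ V (Fin 2)]
    {A B C X Y : P} (hBAC : (∡ B A C).sign ≠ 0)
    (hX : (∡ B A X).sign = (∡ B A C).sign) (hY : (∡ Y A C).sign = (∡ B A C).sign)
    (hle : ∠ B A X + ∠ Y A C ≤ ∠ B A C) :
    ∠ X A Y = ∠ B A C - ∠ B A X - ∠ Y A C := by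
  have hBA : B ≠ A := by rintro rfl; exact hBAC (by simp)
  have hCA : C ≠ A := by rintro rfl; exact hBAC (by simp)
  have hXA : X ≠ A := by rintro rfl; exact hBAC (by simpa using hX.symm)
  have hYA : Y ≠ A := by rintro rfl; exact hBAC (by simpa using hY.symm)
  have hadd : ∡ X A Y = ∡ B A C - ∡ B A X - ∡ Y A C := by
    rw [← oangle_add hBA hYA hCA, ← oangle_add hBA hXA hYA]; abel
  set θ := ∠ B A C - ∠ B A X - ∠ Y A C
  have hθ : ∡ X A Y = θ ∨ ∡ X A Y = -θ := by
    obtain h | h : (∡ B A C).sign = -1 ∨ (∡ B A C).sign = 1 := by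
      revert hBAC; cases (∡ B A C).sign <;> decide
    · right
      rw [h] at hX hY
      rw [hadd, oangle_eq_neg_angle_of_sign_eq_neg_one h, oangle_eq_neg_angle_of_sign_eq_neg_one hX,
        oangle_eq_neg_angle_of_sign_eq_neg_one hY]
      simp only [θ, Real.Angle.coe_sub]; abel
    · left
      rw [h] at hX hY
      rw [hadd, oangle_eq_angle_of_sign_eq_one h, oangle_eq_angle_of_sign_eq_one hX,
        oangle_eq_angle_of_sign_eq_one hY]
      simp only [θ, Real.Angle.coe_sub]
  have hθ0 : 0 ≤ θ := by linarith
  have hθπ : θ ≤ π := by linarith [angle_le_pi B A C, angle_nonneg B A X, angle_nonneg Y A C]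
  rw [angle_eq_abs_oangle_toReal hXA hYA]
  rcases hθ with h | h <;> rw [h]
  · exact Real.Angle.abs_toReal_coe_eq_self_iff.2 ⟨hθ0, hθπ⟩
  · exact Real.Angle.abs_toReal_neg_coe_eq_self_iff.2 ⟨hθ0, hθπ⟩

section Plane

variable [Fact (finrank ℝ V = 2)]

theorem exists_pos_sub_eq_of_mem_interior_convexHull {A B C X : V}
    (hABC : AffineIndependent ℝ ![A, B, C]) (hX : X ∈ interior (convexHull ℝ {A, B, C})) :
    ∃ x y : ℝ, 0 < x ∧ 0 < y ∧ X - A = x • (B - A) + y • (C - A) := by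
  have := FiniteDimensional.of_fact_finrank_eq_two (K := ℝ) (V := V)
  have hspan : affineSpan ℝ (Set.range ![A, B, C]) = ⊤ := by
    rw [hABC.affineSpan_eq_top_iff_card_eq_finrank_add_one, Fintype.card_fin,
      Fact.out (p := finrank ℝ V = 2)]
  let b : AffineBasis (Fin 3) ℝ V := ⟨![A, B, C], hABC, hspan⟩
  have hrange : Set.range b = {A, B, C} := by
    rw [show ⇑b = ![A, B, C] from rfl, Matrix.range_cons, Matrix.range_cons, Matrix.range_cons_empty, Set.singleton_union,
      Set.singleton_union]
  rw [← hrange, b.interior_convexHull] at hX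
  have hsum := b.sum_coord_apply_eq_one X
  have hcomb := b.linear_combination_coord_eq_self X
  simp only [Fin.sum_univ_three] at hsum hcomb
  set x := b.coord 1 X
  set y := b.coord 2 X
  refine ⟨x, y, hX 1, hX 2, ?_⟩
  rw [show b.coord 0 X = 1 - x - y by linarith] at hcomb
  rw [← hcomb, show b 0 = A from rfl, show b 1 = B from rfl, show b 2 = C from rfl]
  module

theorem oangle_sign_eq_of_mem_interior_convexHull [Module.Oriented ℝ V (Fin 2)] {A B C X : V}
    (hABC : AffineIndependent ℝ ![A, B, C]) (hX : X ∈ interior (convexHull ℝ {A, B, C})) :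
    (∡ B A X).sign = (∡ B A C).sign ∧ (∡ X A C).sign = (∡ B A C).sign := by
  obtain ⟨x, y, hx, hy, hXA⟩ := exists_pos_sub_eq_of_mem_interior_convexHull hABC hX
  simp only [EuclideanGeometry.oangle, vsub_eq_sub, hXA]
  constructor
  · rw [Orientation.oangle_sign_smul_add_right, Orientation.oangle_smul_right_of_pos _ _ _ hy]
  · rw [Orientation.oangle_sign_add_smul_left, Orientation.oangle_smul_left_of_pos _ _ _ hx]

theorem angle_eq_sub_sub_of_mem_interior_convexHull {A B C X Y : V}
    (hABC : AffineIndependent ℝ ![A, B, C]) (hX : X ∈ interior (convexHull ℝ {A, B, C}))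
    (hY : Y ∈ interior (convexHull ℝ {A, B, C})) (hle : ∠ B A X + ∠ Y A C ≤ ∠ B A C) :
    ∠ X A Y = ∠ B A C - ∠ B A X - ∠ Y A C := by
  have := FiniteDimensional.of_fact_finrank_eq_two (K := ℝ) (V := V)
  let _ : Module.Oriented ℝ V (Fin 2) := ⟨(finBasisOfFinrankEq ℝ V Fact.out).orientation⟩
  have hBAC : (∡ B A C).sign ≠ 0 := by
    rw [Ne, oangle_sign_eq_zero_iff_collinear, Set.insert_comm]
    exact affineIndependent_iff_not_collinear_set.1 hABC
  exact angle_eq_sub_sub_of_oangle_sign_eq hBAC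
    (oangle_sign_eq_of_mem_interior_convexHull hABC hX).1
    (oangle_sign_eq_of_mem_interior_convexHull hABC hY).2 hle

theorem dist_eq_of_mem_interior_convexHull_of_angle_eq_div_three {A B C Q R : V}
    (hABC : AffineIndependent ℝ ![A, B, C])
    (hQ : Q ∈ interior (convexHull ℝ {A, B, C})) (hQC : ∠ Q C A = ∠ B C A / 3)
    (hQA : ∠ Q A C = ∠ B A C / 3)
    (hR : R ∈ interior (convexHull ℝ {A, B, C})) (hRA : ∠ R A B = ∠ C A B / 3)
    (hRB : ∠ R B A = ∠ C B A / 3) :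
    dist Q R = 4 * (dist B C / sin (∠ B A C)) * sin (∠ B A C / 3) * sin (∠ A B C / 3) *
      sin (∠ B C A / 3) := by
  have hABC' := affineIndependent_iff_not_collinear_set.1 hABC
  have hBAC' : ¬Collinear ℝ {B, A, C} := by rwa [Set.insert_comm]
  have hBCA' : ¬Collinear ℝ {B, C, A} := by rwa [Set.pair_comm C A, Set.insert_comm]
  rw [angle_comm C A B] at hRA
  rw [angle_comm C B A] at hRB
  have hsum := angle_add_angle_add_angle_eq_pi C (ne₁₂_of_not_collinear hABC').symm
  rw [angle_comm C A B] at hsum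
  have hsinA := sin_pos_of_not_collinear hBAC'
  set k := dist B C / sin (∠ B A C)
  have hAB : dist A B = k * sin (∠ B C A) := by
    have := law_sin C A B
    rw [angle_comm C A B] at this
    rw [div_mul_eq_mul_div, eq_div_iff hsinA.ne']
    linear_combination this
  have hAC : dist A C = k * sin (∠ A B C) := by
    have := law_sin A B C
    rw [angle_comm C A B, dist_comm C A] at this
    rw [div_mul_eq_mul_div, eq_div_iff hsinA.ne']
    linear_combination -this
  have hRAQ : ∠ R A Q = ∠ B A C / 3 := by
    have hle : ∠ B A R + ∠ Q A C ≤ ∠ B A C := by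
      rw [angle_comm B A R, hRA, hQA]; linarith [angle_nonneg B A C]
    rw [angle_eq_sub_sub_of_mem_interior_convexHull hABC hR hQ hle, angle_comm B A R, hRA, hQA]
    ring
  refine dist_eq_four_mul_sin_mul_sin_mul_sin (by linarith [angle_pos_of_not_collinear hBAC'])
    (by linarith [angle_pos_of_not_collinear hABC'])
    (by linarith [angle_pos_of_not_collinear hBCA']) (by linarith) (div_nonneg dist_nonneg hsinA.le) ?_ ?_ hRA hRB hQA hQC hRAQ
  · rwa [mul_div_cancel₀ _ three_ne_zero]
  · rwa [mul_div_cancel₀ _ three_ne_zero]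

end Plane

end EuclideanGeometry

/-- Morley's trisector theorem: in any triangle ABC, the three intersection points of
adjacent angle trisectors (P for side BC, Q for side CA, R for side AB, each inside the
triangle and on the trisectors nearest the corresponding side) form an equilateral triangle. -/
theorem morley_trisector (A B C P Q R : EuclideanSpace ℝ (Fin 2))
    (hABC : AffineIndependent ℝ ![A, B, C])
    (hP : P ∈ interior (convexHull ℝ ({A, B, C} : Set (EuclideanSpace ℝ (Fin 2)))))
    (hPB : ∠ P B C = ∠ A B C / 3) (hPC : ∠ P C B = ∠ A C B / 3)
    (hQ : Q ∈ interior (convexHull ℝ ({A, B, C} : Set (EuclideanSpace ℝ (Fin 2)))))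
    (hQC : ∠ Q C A = ∠ B C A / 3) (hQA : ∠ Q A C = ∠ B A C / 3)
    (hR : R ∈ interior (convexHull ℝ ({A, B, C} : Set (EuclideanSpace ℝ (Fin 2)))))
    (hRA : ∠ R A B = ∠ C A B / 3) (hRB : ∠ R B A = ∠ C B A / 3) :
    dist P Q = dist Q R ∧ dist Q R = dist R P := by
  -- The hypotheses are invariant under the rotation `(A, B, C, P, Q, R) ↦ (B, C, A, Q, R, P)`.
  have : Fact (finrank ℝ (EuclideanSpace ℝ (Fin 2)) = 2) := ⟨finrank_euclideanSpace_fin⟩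
  have hBCA : ({B, C, A} : Set (EuclideanSpace ℝ (Fin 2))) = {A, B, C} := by
    rw [Set.pair_comm C A, Set.insert_comm]
  have hCAB : ({C, A, B} : Set (EuclideanSpace ℝ (Fin 2))) = {A, B, C} := by
    rw [Set.insert_comm C A, Set.pair_comm C B]
  have hABC' := affineIndependent_iff_not_collinear_set.1 hABC
  have hQR := dist_eq_of_mem_interior_convexHull_of_angle_eq_div_three hABC hQ hQC hQA hR hRA hRB
  have hRP := dist_eq_of_mem_interior_convexHull_of_angle_eq_div_three
    (affineIndependent_iff_not_collinear_set.2 (hBCA ▸ hABC')) (hBCA ▸ hR) hRA hRB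
    (hBCA ▸ hP) hPB hPC
  have hPQ := dist_eq_of_mem_interior_convexHull_of_angle_eq_div_three
    (affineIndependent_iff_not_collinear_set.2 (hCAB ▸ hABC')) (hCAB ▸ hP) hPB hPC
    (hCAB ▸ hQ) hQC hQA
  have hB : dist C A / sin (∠ C B A) = dist B C / sin (∠ B A C) := by
    rw [← inv_div, ← inv_div (sin (∠ B A C)), angle_comm C B A, angle_comm B A C,
      sin_angle_div_dist_eq_sin_angle_div_dist (ne₂₃_of_not_collinear hABC')
        (ne₁₃_of_not_collinear hABC').symm]
  have hC : dist A B / sin (∠ A C B) = dist B C / sin (∠ B A C) := by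
    rw [← inv_div, ← inv_div (sin (∠ B A C)), angle_comm A C B, angle_comm B A C,
      sin_angle_div_dist_eq_sin_angle_div_dist (ne₁₂_of_not_collinear hABC')
        (ne₂₃_of_not_collinear hABC')]
  rw [hPQ, hQR, hRP, hB, hC, angle_comm C B A, angle_comm C A B, angle_comm A C B]
  constructor <;> ring
end

section
/- Nine-point circle (Feuerbach) theorem: for any triangle, the midpoints of the three sides, the feet of the three altitudes, and the midpoints of the segments from the orthocenter to each vertex all lie on a single circle. -/
open EuclideanGeometry

/-!
Let `M_A` and `E_A` be the midpoints of `BC` and `HA`; the circle on the diameter `[M_A, E_A]` is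
the nine-point circle. The three segments `[M_A, E_A]`, `[M_B, E_B]`, `[M_C, E_C]` share their
midpoint `(A + B + C + H) / 4`, and they have equal lengths: two of them are the bimedians of a
quadrilateral whose diagonals are a side of the triangle and the altitude through `H`
perpendicular to it. The foot `F_A` sees `[M_A, E_A]` at a right angle, since `M_A - F_A` is
parallel to `BC` while `E_A - F_A = (H - A) / 2 + (A - F_A)` is perpendicular to it, so Thales
puts `F_A` on the circle.
-/

open InnerProductSpace

theorem midpoint_midpoint_midpoint_comm {R V : Type*} [CommRing R] [Invertible (2 : R)]
    [AddCommGroup V] [Module R V] (a b c d : V) :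
    midpoint R (midpoint R a b) (midpoint R c d) = midpoint R (midpoint R a c) (midpoint R b d) := by
  simp only [midpoint_eq_smul_add]
  module

section

variable {V P : Type*} [NormedAddCommGroup V] [InnerProductSpace ℝ V] [MetricSpace P]
  [NormedAddTorsor V P]

theorem EuclideanGeometry.Sphere.mem_ofDiameter_of_inner_eq_zero {p₁ p₂ p : P}
    (h : ⟪p₁ -ᵥ p, p₂ -ᵥ p⟫_ℝ = 0) : p ∈ Sphere.ofDiameter p₁ p₂ :=
  Sphere.angle_eq_pi_div_two_iff_mem_sphere_ofDiameter.mp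
    ((InnerProductGeometry.inner_eq_zero_iff_angle_eq_pi_div_two _ _).mp h)

theorem inner_vsub_eq_zero_of_mem_affineSpan_pair {p₁ p₂ p q : P} {v : V}
    (hp : p ∈ line[ℝ, p₁, p₂]) (hq : q ∈ line[ℝ, p₁, p₂]) (hv : ⟪v, p₂ -ᵥ p₁⟫_ℝ = 0) :
    ⟪p -ᵥ q, v⟫_ℝ = 0 := by
  have hdir : p -ᵥ q ∈ vectorSpan ℝ {p₁, p₂} := by
    rw [← direction_affineSpan]
    exact AffineSubspace.vsub_mem_direction hp hq
  obtain ⟨t, ht⟩ := mem_vectorSpan_pair_rev.mp hdir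
  rw [← ht, real_inner_smul_left, real_inner_comm, hv, mul_zero]

end

section

variable {V : Type*} [NormedAddCommGroup V] [InnerProductSpace ℝ V]

theorem dist_midpoint_midpoint_eq_iff_inner_eq_zero (a b c d : V) :
    dist (midpoint ℝ a b) (midpoint ℝ c d) = dist (midpoint ℝ a c) (midpoint ℝ b d) ↔
      ⟪d - a, c - b⟫_ℝ = 0 := by
  rw [dist_eq_norm', dist_eq_norm', ← real_inner_add_sub_eq_zero_iff]
  have hsum : midpoint ℝ c d - midpoint ℝ a b + (midpoint ℝ b d - midpoint ℝ a c) = d - a := by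
    simp only [midpoint_eq_smul_add, invOf_eq_inv]
    module
  have hdiff : midpoint ℝ c d - midpoint ℝ a b - (midpoint ℝ b d - midpoint ℝ a c) = c - b := by
    simp only [midpoint_eq_smul_add, invOf_eq_inv]
    module
  rw [hsum, hdiff]

theorem EuclideanGeometry.Sphere.ofDiameter_midpoint_midpoint_eq {a b c d : V}
    (h : ⟪d - a, c - b⟫_ℝ = 0) :
    Sphere.ofDiameter (midpoint ℝ a b) (midpoint ℝ c d) =
      Sphere.ofDiameter (midpoint ℝ a c) (midpoint ℝ b d) := by
  refine Sphere.ext (midpoint_midpoint_midpoint_comm a b c d) ?_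
  simp only [Sphere.ofDiameter, (dist_midpoint_midpoint_eq_iff_inner_eq_zero a b c d).mpr h]

theorem inner_sub_sub_eq_zero_of_altitudes {A B C H : V} (hA : ⟪H - A, C - B⟫_ℝ = 0)
    (hB : ⟪H - B, A - C⟫_ℝ = 0) : ⟪H - C, B - A⟫_ℝ = 0 := by
  simp only [inner_sub_left, inner_sub_right, real_inner_comm] at hA hB ⊢
  linear_combination -hA - hB

theorem inner_midpoint_sub_foot_eq_zero {A B C H F : V} (hF : F ∈ line[ℝ, B, C])
    (hAF : ⟪A - F, C - B⟫_ℝ = 0) (hH : ⟪H - A, C - B⟫_ℝ = 0) :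
    ⟪midpoint ℝ B C - F, midpoint ℝ H A - F⟫_ℝ = 0 := by
  refine inner_vsub_eq_zero_of_mem_affineSpan_pair
    (AffineMap.lineMap_mem_affineSpan_pair _ _ _) hF ?_
  have hsplit : midpoint ℝ H A - F = (2⁻¹ : ℝ) • (H - A) + (A - F) := by
    simp only [midpoint_eq_smul_add, invOf_eq_inv]
    module
  rw [vsub_eq_sub, hsplit, inner_add_left, real_inner_smul_left, hH, hAF, mul_zero, zero_add]

end

theorem nine_point_circle_general (A B C H FA FB FC : EuclideanSpace ℝ (Fin 2))
    (hH1 : inner ℝ (H - A) (C - B) = (0 : ℝ))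
    (hH2 : inner ℝ (H - B) (A - C) = (0 : ℝ))
    (hFA : FA ∈ affineSpan ℝ ({B, C} : Set (EuclideanSpace ℝ (Fin 2))) ∧
      inner ℝ (A - FA) (C - B) = (0 : ℝ))
    (hFB : FB ∈ affineSpan ℝ ({C, A} : Set (EuclideanSpace ℝ (Fin 2))) ∧
      inner ℝ (B - FB) (A - C) = (0 : ℝ))
    (hFC : FC ∈ affineSpan ℝ ({A, B} : Set (EuclideanSpace ℝ (Fin 2))) ∧
      inner ℝ (C - FC) (B - A) = (0 : ℝ)) :
    ∃ (O : EuclideanSpace ℝ (Fin 2)) (ρ : ℝ),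
      ∀ p ∈ ({midpoint ℝ B C, midpoint ℝ C A, midpoint ℝ A B, FA, FB, FC,
          midpoint ℝ H A, midpoint ℝ H B, midpoint ℝ H C} :
            Set (EuclideanSpace ℝ (Fin 2))),
        dist O p = ρ := by
  have hH3 := inner_sub_sub_eq_zero_of_altitudes hH1 hH2
  have hSB : Sphere.ofDiameter (midpoint ℝ C A) (midpoint ℝ H B) =
      Sphere.ofDiameter (midpoint ℝ B C) (midpoint ℝ H A) := by
    simpa only [midpoint_comm B H, midpoint_comm C B, midpoint_comm A H] using
      Sphere.ofDiameter_midpoint_midpoint_eq hH3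
  have hSC : Sphere.ofDiameter (midpoint ℝ A B) (midpoint ℝ H C) =
      Sphere.ofDiameter (midpoint ℝ B C) (midpoint ℝ H A) := by
    simpa only [midpoint_comm A H, midpoint_comm B A, midpoint_comm C H] using
      (Sphere.ofDiameter_midpoint_midpoint_eq hH2).symm
  set S := Sphere.ofDiameter (midpoint ℝ B C) (midpoint ℝ H A)
  refine ⟨S.center, S.radius, fun p hp => ?_⟩
  rw [dist_comm, ← mem_sphere]
  rcases hp with rfl | rfl | rfl | rfl | rfl | rfl | rfl | rfl | rfl
  · exact (Sphere.isDiameter_ofDiameter _ _).left_mem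
  · exact hSB ▸ (Sphere.isDiameter_ofDiameter _ _).left_mem
  · exact hSC ▸ (Sphere.isDiameter_ofDiameter _ _).left_mem
  · exact Sphere.mem_ofDiameter_of_inner_eq_zero (inner_midpoint_sub_foot_eq_zero hFA.1 hFA.2 hH1)
  · exact hSB ▸ Sphere.mem_ofDiameter_of_inner_eq_zero
      (inner_midpoint_sub_foot_eq_zero hFB.1 hFB.2 hH2)
  · exact hSC ▸ Sphere.mem_ofDiameter_of_inner_eq_zero
      (inner_midpoint_sub_foot_eq_zero hFC.1 hFC.2 hH3)
  · exact (Sphere.isDiameter_ofDiameter _ _).right_mem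
  · exact hSB ▸ (Sphere.isDiameter_ofDiameter _ _).right_mem
  · exact hSC ▸ (Sphere.isDiameter_ofDiameter _ _).right_mem

/-- Nine-point circle (Feuerbach) theorem: for a triangle ABC with orthocenter H, the
midpoints of the three sides, the feet of the three altitudes, and the midpoints of the
segments from H to each vertex all lie on one circle. -/
theorem nine_point_circle (A B C H FA FB FC : EuclideanSpace ℝ (Fin 2))
    (hABC : AffineIndependent ℝ ![A, B, C])
    (hH1 : inner ℝ (H - A) (C - B) = (0 : ℝ))
    (hH2 : inner ℝ (H - B) (A - C) = (0 : ℝ))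
    (hFA : FA ∈ affineSpan ℝ ({B, C} : Set (EuclideanSpace ℝ (Fin 2))) ∧
      inner ℝ (A - FA) (C - B) = (0 : ℝ))
    (hFB : FB ∈ affineSpan ℝ ({C, A} : Set (EuclideanSpace ℝ (Fin 2))) ∧
      inner ℝ (B - FB) (A - C) = (0 : ℝ))
    (hFC : FC ∈ affineSpan ℝ ({A, B} : Set (EuclideanSpace ℝ (Fin 2))) ∧
      inner ℝ (C - FC) (B - A) = (0 : ℝ)) :
    ∃ (O : EuclideanSpace ℝ (Fin 2)) (ρ : ℝ),
      ∀ p ∈ ({midpoint ℝ B C, midpoint ℝ C A, midpoint ℝ A B, FA, FB, FC,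
          midpoint ℝ H A, midpoint ℝ H B, midpoint ℝ H C} :
            Set (EuclideanSpace ℝ (Fin 2))),
        dist O p = ρ :=
  nine_point_circle_general A B C H FA FB FC hH1 hH2 hFA hFB hFC
end
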